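/- Let B be the bipath poset, with underlying set (ℝ × {1,2}) ⊔ {−∞, +∞}, ordered so that −∞ is the minimum, +∞ is the maximum, and (s,i) ≤ (t,i) iff s ≤ t, with (s,1) and (t,2) incomparable. Let I and J be intervals of B both containing −∞ and not equal to B (type L intervals). Then Hom_B(k_I, k_J) ≠ 0 if and only if J ⊆ I. -/

import Mathlib

open CategoryTheory NNReal

/-- The upset `C^↑` generated by a subset of a poset. -/
def genUpset {P : Type} [PartialOrder P] (C : Set P) : Set P := {p | ∃ a ∈ C, a ≤ p}

/-- The downset `C^↓` generated by a subset of a poset. -/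
def genDownset {P : Type} [PartialOrder P] (C : Set P) : Set P := {p | ∃ a ∈ C, p ≤ a}

/-- Convexity of a subset of a poset. -/
def IsOrdConvex {P : Type} [PartialOrder P] (C : Set P) : Prop :=
  ∀ ⦃p q r : P⦄, p ∈ C → q ∈ C → p ≤ r → r ≤ q → r ∈ C

/-- Connectivity of a subset of a poset: any two elements are joined by a
fence of pairwise comparable elements inside the subset. -/
def IsFenceConnected {P : Type} [PartialOrder P] (C : Set P) : Prop :=
  ∀ ⦃p⦄, p ∈ C → ∀ ⦃q⦄, q ∈ C →
    Relation.ReflTransGen (fun a b => a ∈ C ∧ b ∈ C ∧ (a ≤ b ∨ b ≤ a)) p q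

/-- An interval of a poset: a convex and connected subset. -/
def IsItv {P : Type} [PartialOrder P] (C : Set P) : Prop :=
  IsOrdConvex C ∧ IsFenceConnected C

/-- `C` is a connected component of the subset `S` of a poset. -/
def IsFenceComponent {P : Type} [PartialOrder P] (S C : Set P) : Prop :=
  ∃ p ∈ S, C = {q | q ∈ S ∧
    Relation.ReflTransGen (fun a b => a ∈ S ∧ b ∈ S ∧ (a ≤ b ∨ b ≤ a)) p q}

attribute [local instance] Classical.propDecidable

/-- The interval module `k_I` attached to a convex subset `I` of a poset `P`:
it is `k` (here presented as `PLift (p ∈ I) → k`) at points of `I` with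
identity structure maps inside `I`, and `0` elsewhere. -/
noncomputable def itvMod (k : Type) [Field k] {P : Type} [PartialOrder P]
    (I : Set P) (hI : IsOrdConvex I) : P ⥤ ModuleCat k where
  obj p := ModuleCat.of k (PLift (p ∈ I) → k)
  map {p q} _ := ModuleCat.ofHom
    { toFun := fun v _ => if hp : p ∈ I then v ⟨hp⟩ else 0
      map_add' := by
        intro v w; funext hq; by_cases hp : p ∈ I <;> simp [hp]
      map_smul' := by
        intro c v; funext hq; by_cases hp : p ∈ I <;> simp [hp] }
  map_id p := by
    apply ModuleCat.hom_ext; apply LinearMap.ext; intro v; funext hq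
    rcases hq with ⟨hq⟩
    simp [hq]
  map_comp {p q r} f g := by
    apply ModuleCat.hom_ext; apply LinearMap.ext; intro v; funext hr
    rcases hr with ⟨hr⟩
    by_cases hp : p ∈ I
    · have hq : q ∈ I := hI hp hr (leOfHom f) (leOfHom g)
      simp [hp, hq]
    · by_cases hq : q ∈ I <;> simp [hp, hq] <;> rfl

/-- The (continuous) bipath poset `B`: two copies of `ℝ` (`up` and `down`)
joined at a global minimum `-∞` (`bot`) and a global maximum `+∞` (`top`),
with the two copies of `ℝ` mutually incomparable. -/
inductive Bipath : Type
  | bot : Bipath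
  | top : Bipath
  | up : ℝ → Bipath
  | down : ℝ → Bipath

namespace Bipath

/-- The order relation of the bipath poset. -/
def le : Bipath → Bipath → Prop
  | bot, _ => True
  | _, top => True
  | up r, up s => r ≤ s
  | down r, down s => r ≤ s
  | _, _ => False

instance : PartialOrder Bipath where
  le := Bipath.le
  le_refl x := by cases x <;> simp [Bipath.le]
  le_trans x y z hxy hyz := by
    cases x <;> cases y <;> cases z <;> simp_all [Bipath.le] <;> linarith
  le_antisymm x y h1 h2 := by
    cases x <;> cases y <;> simp_all [Bipath.le] <;> linarith

theorem le_iff (x y : Bipath) : x ≤ y ↔ Bipath.le x y := Iff.rfl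

/-- Shifting the bipath poset by `ε`: real coordinates are translated by `ε`
and `±∞` are fixed. -/
def shift (ε : ℝ) : Bipath → Bipath
  | bot => bot
  | top => top
  | up r => up (r + ε)
  | down r => down (r + ε)

theorem shift_mono (ε : ℝ) : Monotone (shift ε) := by
  intro x y h
  cases x <;> cases y <;> simp_all [shift, le_iff, Bipath.le]

theorem le_shift (ε : ℝ) (hε : 0 ≤ ε) (p : Bipath) : p ≤ shift ε p := by
  cases p <;> simp [shift, le_iff, Bipath.le] <;> linarith

theorem shift_neg_shift (ε : ℝ) (p : Bipath) : shift (-ε) (shift ε p) = p := by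
  cases p <;> simp [shift]

/-- The shift by `ε` as an order isomorphism of the bipath poset. -/
def shiftIso (ε : ℝ) : Bipath ≃o Bipath where
  toFun := shift ε
  invFun := shift (-ε)
  left_inv p := by cases p <;> simp [shift]
  right_inv p := by cases p <;> simp [shift]
  map_rel_iff' := by
    intro p q
    constructor
    · intro h
      have h2 := shift_mono (-ε) h
      simp only [Equiv.coe_fn_mk] at h2
      rwa [shift_neg_shift, shift_neg_shift] at h2
    · exact fun h => shift_mono ε h

end Bipath

/-! Since `-∞` lies below everything, `k_I` is generated by its value at `-∞` and `k_J` embeds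
into each of its nonzero values. So a morphism `k_I ⟶ k_J` is determined by its component at `-∞`,
which must vanish as soon as some `q ∈ J` has `k_I(q) = 0`. Conversely, for `J ⊆ I` the
convex set `J` is a downset of `I`, so restricting to `J` is a nonzero morphism. -/

section itvMod

variable {k : Type} [Field k] {P : Type} [PartialOrder P] {I J : Set P}

theorem itvMod_obj_subsingleton (hI : IsOrdConvex I) {p : P} (hp : p ∉ I) :
    Subsingleton ((itvMod k I hI).obj p) :=
  ⟨fun _ _ => funext fun h => absurd h.down hp⟩

theorem itvMod_map_apply_of_mem (hI : IsOrdConvex I) {p q : P} (f : p ⟶ q) (hp : p ∈ I)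
    (v : (itvMod k I hI).obj p) : (itvMod k I hI).map f v = fun _ => v ⟨hp⟩ :=
  funext fun _ => dif_pos hp

theorem itvMod_map_injective (hI : IsOrdConvex I) {p q : P} (f : p ⟶ q) (hq : q ∈ I) :
    Function.Injective ((itvMod k I hI).map f) := by
  by_cases hp : p ∈ I
  · intro v w hvw
    rw [itvMod_map_apply_of_mem hI f hp, itvMod_map_apply_of_mem hI f hp] at hvw
    funext h
    exact congrFun hvw ⟨hq⟩
  · have := itvMod_obj_subsingleton (k := k) hI hp
    exact Function.injective_of_subsingleton _

theorem itvMod_map_surjective (hI : IsOrdConvex I) {p q : P} (f : p ⟶ q) (hp : p ∈ I) :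
    Function.Surjective ((itvMod k I hI).map f) := by
  by_cases hq : q ∈ I
  · intro w
    exact ⟨fun _ => w ⟨hq⟩, itvMod_map_apply_of_mem hI f hp _⟩
  · have := itvMod_obj_subsingleton (k := k) hI hq
    exact fun w => ⟨0, Subsingleton.elim _ _⟩

noncomputable def itvModHomOfSubset (hIc : IsOrdConvex I) (hJc : IsOrdConvex J) (hJI : J ⊆ I)
    (hdown : ∀ ⦃p q : P⦄, p ≤ q → q ∈ J → p ∈ I → p ∈ J) :
    itvMod k I hIc ⟶ itvMod k J hJc where
  app p := ModuleCat.ofHom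
    { toFun := fun v hpJ => v ⟨hJI hpJ.down⟩
      map_add' := fun _ _ => rfl
      map_smul' := fun _ _ => rfl }
  naturality := by
    intro p q f
    ext v
    funext ⟨hq⟩
    change (if hp : p ∈ I then v ⟨hp⟩ else 0) = (if hp : p ∈ J then v ⟨hJI hp⟩ else 0)
    by_cases hp : p ∈ J
    · rw [dif_pos (hJI hp), dif_pos hp]
    · rw [dif_neg fun hpI => hp (hdown (leOfHom f) hq hpI), dif_neg hp]

theorem itvModHomOfSubset_ne_zero (hIc : IsOrdConvex I) (hJc : IsOrdConvex J) (hJI : J ⊆ I)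
    (hdown : ∀ ⦃p q : P⦄, p ≤ q → q ∈ J → p ∈ I → p ∈ J) (hJ : J.Nonempty) :
    itvModHomOfSubset (k := k) hIc hJc hJI hdown ≠ 0 := by
  obtain ⟨p, hp⟩ := hJ
  intro h
  have := congrFun (ConcreteCategory.congr_hom (congrArg (NatTrans.app · p) h) fun _ => 1) ⟨hp⟩
  exact one_ne_zero this

end itvMod

namespace CategoryTheory.NatTrans

variable {C : Type*} [Category C] {R : Type*} [Ring R] {F G : C ⥤ ModuleCat R}

theorem app_eq_zero_of_map_surjective (φ : F ⟶ G) {p q : C} (f : p ⟶ q)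
    (hf : Function.Surjective (F.map f)) (hp : φ.app p = 0) : φ.app q = 0 := by
  ext w
  obtain ⟨v, rfl⟩ := hf w
  rw [← ConcreteCategory.comp_apply, φ.naturality, ConcreteCategory.comp_apply, hp]
  simp

theorem app_eq_zero_of_map_injective (φ : F ⟶ G) {p q : C} (f : p ⟶ q)
    (hf : Function.Injective (G.map f)) [Subsingleton (F.obj q)] : φ.app p = 0 := by
  ext v
  apply hf
  rw [← ConcreteCategory.comp_apply, ← φ.naturality, ConcreteCategory.comp_apply,
    Subsingleton.elim (F.map f v) 0]
  simp

end CategoryTheory.NatTrans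

theorem Bipath.isBot_bot : IsBot Bipath.bot := fun _ => trivial

/-- For type-`L` intervals `I`, `J` of the bipath poset (both containing `-∞`
and different from the whole poset), `Hom_B(k_I, k_J) ≠ 0` iff `J ⊆ I`. -/
theorem hom_ne_zero_iff_subset_typeL (k : Type) [Field k]
    {I J : Set Bipath} (hI : IsItv I) (hJ : IsItv J)
    (hIL : Bipath.bot ∈ I ∧ I ≠ Set.univ) (hJL : Bipath.bot ∈ J ∧ J ≠ Set.univ) :
    (∃ φ : itvMod k I hI.1 ⟶ itvMod k J hJ.1, φ ≠ 0) ↔ J ⊆ I := by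
  constructor
  · rintro ⟨φ, hφ⟩ q hqJ
    by_contra hqI
    have := itvMod_obj_subsingleton (k := k) hI.1 hqI
    have hbot : φ.app Bipath.bot = 0 :=
      φ.app_eq_zero_of_map_injective (homOfLE (Bipath.isBot_bot q))
        (itvMod_map_injective hJ.1 _ hqJ)
    exact hφ <| NatTrans.ext <| funext fun p =>
      φ.app_eq_zero_of_map_surjective (homOfLE (Bipath.isBot_bot p))
        (itvMod_map_surjective hI.1 _ hIL.1) hbot
  · intro hJI
    have hdown : ∀ ⦃p q : Bipath⦄, p ≤ q → q ∈ J → p ∈ I → p ∈ J :=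
      fun p _ hpq hq _ => hJ.1 hJL.1 hq (Bipath.isBot_bot p) hpq
    exact ⟨itvModHomOfSubset hI.1 hJ.1 hJI hdown,
      itvModHomOfSubset_ne_zero hI.1 hJ.1 hJI hdown ⟨_, hJL.1⟩⟩
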